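/- Bang cut: if ⊩_B^L !φ and !φ ⊩_B^K ψ, then ⊩_B^{L⊎K} ψ. -/

import Mathlib

abbrev Atom := ℕ
abbrev ASeq := Multiset Atom × Atom
abbrev Box := Multiset ASeq
abbrev ARule := Multiset Box × Box × Atom
abbrev Base := Set ARule

/-- An atom `d` is persistent in `B` if there is a rule `⟨∅, S, d⟩ ∈ B` with `S` nonempty. -/
def Persistent (B : Base) (d : Atom) : Prop :=
  ∃ S : Box, S ≠ 0 ∧ ((0 : Multiset Box), S, d) ∈ B

/-- Atomic derivability in a base. -/
inductive Deriv (B : Base) : Multiset Atom → Atom → Prop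
  | ref (p : Atom) : Deriv B {p} p
  | app (S : Box) (p : Atom)
      (bc : List (Box × Multiset Atom))
      (dc : List (Atom × Multiset Atom))
      (hrule : ((↑(bc.map Prod.fst) : Multiset Box), S, p) ∈ B)
      (hpers : ∀ x ∈ dc, Persistent B x.1)
      (hbox : ∀ x ∈ bc, ∀ s ∈ x.1, Deriv B (x.2 + s.1) s.2)
      (hd : ∀ x ∈ dc, Deriv B x.2 x.1)
      (hS : ∀ s ∈ S, Deriv B ((↑(dc.map Prod.fst) : Multiset Atom) + s.1) s.2) :
      Deriv B ((bc.map Prod.snd).sum + (dc.map Prod.snd).sum) p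

/-- Formulas of intuitionistic linear logic. -/
inductive Fml : Type
  | atom : Atom → Fml
  | top : Fml
  | zero : Fml
  | one : Fml
  | limp : Fml → Fml → Fml
  | tens : Fml → Fml → Fml
  | wth : Fml → Fml → Fml
  | plus : Fml → Fml → Fml
  | bang : Fml → Fml
deriving DecidableEq

/-- The degree of a formula. -/
def deg : Fml → ℕ
  | .atom _ => 1
  | .top => 2
  | .zero => 2
  | .one => 2
  | .limp φ ψ => deg φ + deg ψ + 1
  | .tens φ ψ => deg φ + deg ψ + 1
  | .wth φ ψ => deg φ + deg ψ + 1
  | .plus φ ψ => deg φ + deg ψ + 1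
  | .bang φ => deg φ + 1

theorem one_le_deg (φ : Fml) : 1 ≤ deg φ := by
  cases φ <;> simp [deg] <;> omega

mutual
  /-- Support `⊩_B^L φ` (empty left-hand side). -/
  def Supp : Base → Multiset Atom → Fml → Prop
    | B, L, .atom p => Deriv B L p
    | _, _, .top => True
    | B, L, .zero => ∀ (K : Multiset Atom) (p : Atom), Supp B (L + K) (.atom p)
    | B, L, .one => ∀ C : Base, B ⊆ C → ∀ (K : Multiset Atom) (p : Atom),
        Supp C K (.atom p) → Supp C (L + K) (.atom p)
    | B, L, .limp φ ψ => SuppInf1 B L φ ψ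
    | B, L, .tens φ ψ => ∀ C : Base, B ⊆ C → ∀ (K : Multiset Atom) (p : Atom),
        SuppInf2 C K φ ψ (.atom p) → Supp C (L + K) (.atom p)
    | B, L, .wth φ ψ => Supp B L φ ∧ Supp B L ψ
    | B, L, .plus φ ψ => ∀ C : Base, B ⊆ C → ∀ (K : Multiset Atom) (p : Atom),
        SuppInf1 C K φ (.atom p) → SuppInf1 C K ψ (.atom p) → Supp C (L + K) (.atom p)
    | B, L, .bang φ => ∀ C : Base, B ⊆ C → ∀ (K : Multiset Atom) (p : Atom),
        (∀ D : Base, C ⊆ D → Supp D 0 φ → Supp D K (.atom p)) → Supp C (L + K) (.atom p)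
  termination_by B L φ => 2 * deg φ
  decreasing_by
    all_goals
      try simp only [deg]
      try have h1 := one_le_deg φ
      try have h2 := one_le_deg ψ
      try have h3 := one_le_deg χ
      try have h4 := one_le_deg α
      try have h5 := one_le_deg β
      omega

  /-- The (Inf) clause for a singleton context `{φ} ⊩_B^L χ`. -/
  def SuppInf1 : Base → Multiset Atom → Fml → Fml → Prop
    | B, L, .bang α, χ => ∀ C : Base, B ⊆ C → Supp C 0 α → Supp C L χ
    | B, L, φ, χ => ∀ C : Base, B ⊆ C → ∀ K : Multiset Atom,
        Supp C K φ → Supp C (L + K) χ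
  termination_by B L φ χ => 2 * (deg φ + deg χ) - 1
  decreasing_by
    all_goals
      try simp only [deg]
      try have h1 := one_le_deg φ
      try have h2 := one_le_deg ψ
      try have h3 := one_le_deg χ
      try have h4 := one_le_deg α
      try have h5 := one_le_deg β
      omega

  /-- The (Inf) clause for a two-element context `{φ, ψ} ⊩_B^L χ`. -/
  def SuppInf2 : Base → Multiset Atom → Fml → Fml → Fml → Prop
    | B, L, .bang α, .bang β, χ => ∀ C : Base, B ⊆ C →
        Supp C 0 α → Supp C 0 β → Supp C L χ
    | B, L, .bang α, ψ, χ => ∀ C : Base, B ⊆ C → ∀ K : Multiset Atom,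
        Supp C 0 α → Supp C K ψ → Supp C (L + K) χ
    | B, L, φ, .bang β, χ => ∀ C : Base, B ⊆ C → ∀ K : Multiset Atom,
        Supp C 0 β → Supp C K φ → Supp C (L + K) χ
    | B, L, φ, ψ, χ => ∀ C : Base, B ⊆ C → ∀ K₁ K₂ : Multiset Atom,
        Supp C K₁ φ → Supp C K₂ ψ → Supp C (L + K₁ + K₂) χ
  termination_by B L φ ψ χ => 2 * (deg φ + deg ψ + deg χ) - 1
  decreasing_by
    all_goals
      try simp only [deg]
      try have h1 := one_le_deg φ
      try have h2 := one_le_deg ψ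
      try have h3 := one_le_deg χ
      try have h4 := one_le_deg α
      try have h5 := one_le_deg β
      omega
end

/-- Is the formula a `!`-formula? -/
def isBang : Fml → Bool
  | .bang _ => true
  | _ => false

/-- Strip a top-level `!`. -/
def unbang : Fml → Fml
  | .bang φ => φ
  | φ => φ

/-- Support for a multiset of formulas: the `(⊎)` clause. -/
def SuppMS (B : Base) (L : Multiset Atom) (Γ : Multiset Fml) : Prop :=
  ∃ l : List (Fml × Multiset Atom), (↑(l.map Prod.fst) : Multiset Fml) = Γ ∧
    (l.map Prod.snd).sum = L ∧ ∀ x ∈ l, Supp B x.2 x.1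

/-- The official (Inf) clause: `Γ ⊩_B^L φ`, where `Γ = !Δ ⊎ Θ`. -/
def SuppSeq (B : Base) (L : Multiset Atom) (Γ : Multiset Fml) (φ : Fml) : Prop :=
  ∀ C : Base, B ⊆ C → ∀ K : Multiset Atom,
    SuppMS C 0 ((Γ.filter (fun ψ => isBang ψ = true)).map unbang) →
    SuppMS C K (Γ.filter (fun ψ => isBang ψ = false)) →
    Supp C (L + K) φ

/-- Validity of a sequent `(Γ : φ)`. -/
def Valid (Γ : Multiset Fml) (φ : Fml) : Prop :=
  ∀ B : Base, SuppSeq B 0 Γ φ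



theorem Persistent.mono {B C : Base} (h : B ⊆ C) {d : Atom} :
    Persistent B d → Persistent C d := fun ⟨S, hS, hm⟩ => ⟨S, hS, h hm⟩

theorem Deriv.mono {B C : Base} (h : B ⊆ C) {M : Multiset Atom} {p : Atom} :
    Deriv B M p → Deriv C M p := by
  intro hd
  induction hd with
  | ref p => exact Deriv.ref p
  | app S p bc dc hrule hpers _ _ _ ihbox ihd ihS =>
    exact Deriv.app S p bc dc (h hrule) (fun x hx => (hpers x hx).mono h) ihbox ihd ihS

theorem SuppInf1.mono {B C : Base} (h : B ⊆ C) {L : Multiset Atom} {φ χ : Fml} :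
    SuppInf1 B L φ χ → SuppInf1 C L φ χ := by
  cases φ <;> simp only [SuppInf1] <;> exact fun hs D hCD => hs D (h.trans hCD)

theorem SuppInf2.mono {B C : Base} (h : B ⊆ C) {L : Multiset Atom} {φ ψ χ : Fml} :
    SuppInf2 B L φ ψ χ → SuppInf2 C L φ ψ χ := by
  cases φ <;> cases ψ <;> simp only [SuppInf2] <;> exact fun hs D hCD => hs D (h.trans hCD)

theorem Supp.mono {B C : Base} (h : B ⊆ C) {L : Multiset Atom} {φ : Fml} :
    Supp B L φ → Supp C L φ := by
  induction φ generalizing L with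
  | atom p => simp only [Supp]; exact Deriv.mono h
  | top => simp only [Supp]; exact id
  | zero => simp only [Supp] at *; exact fun hs K p => Deriv.mono h (hs K p)
  | one => simp only [Supp]; exact fun hs D hCD => hs D (h.trans hCD)
  | limp φ ψ _ _ => simp only [Supp]; exact SuppInf1.mono h
  | tens φ ψ _ _ => simp only [Supp]; exact fun hs D hCD => hs D (h.trans hCD)
  | wth φ ψ ih1 ih2 => simp only [Supp]; exact fun hs => ⟨ih1 hs.1, ih2 hs.2⟩
  | plus φ ψ _ _ => simp only [Supp]; exact fun hs D hCD => hs D (h.trans hCD)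
  | bang φ _ => simp only [Supp]; exact fun hs D hCD => hs D (h.trans hCD)

theorem bang_cut_aux (φ : Fml) : ∀ (ψ : Fml) (B : Base) (L K : Multiset Atom),
    Supp B L (.bang φ) → (∀ C : Base, B ⊆ C → Supp C 0 φ → Supp C K ψ) →
    Supp B (L + K) ψ := by
  intro ψ
  induction ψ with
  | atom p =>
    intro B L K h1 h2
    simp only [Supp] at h1 ⊢
    exact h1 B subset_rfl K p (fun D hD hφ => by simpa only [Supp] using h2 D hD hφ)
  | top => intro B L K h1 h2; simp only [Supp]
  | zero =>
    intro B L K h1 h2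
    simp only [Supp] at h1 ⊢
    intro M p
    rw [add_assoc]
    refine h1 B subset_rfl (K + M) p (fun D hD hφ => ?_)
    have h3 := h2 D hD hφ
    simp only [Supp] at h3
    exact h3 M p
  | one =>
    intro B L K h1 h2
    simp only [Supp] at h1 ⊢
    intro C hBC M p hM
    rw [add_assoc]
    refine h1 C hBC (K + M) p (fun D hCD hφ => ?_)
    have h3 := h2 D (hBC.trans hCD) hφ
    simp only [Supp] at h3
    exact h3 D subset_rfl M p (Deriv.mono hCD hM)
  | limp ψ1 ψ2 _ ih2 =>
    intro B L K h1 h2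
    simp only [Supp]
    cases ψ1 with
    | bang α =>
      simp only [SuppInf1]
      intro C hBC hα
      refine ih2 C L K (Supp.mono hBC h1) (fun D hCD hφ => ?_)
      have h3 := h2 D (hBC.trans hCD) hφ
      simp only [Supp] at h3
      simp only [SuppInf1] at h3
      exact h3 D subset_rfl (Supp.mono hCD hα)
    | _ =>
      simp only [SuppInf1]
      intro C hBC M hM
      rw [add_assoc]
      refine ih2 C L (K + M) (Supp.mono hBC h1) (fun D hCD hφ => ?_)
      have h3 := h2 D (hBC.trans hCD) hφ
      simp only [Supp] at h3
      simp only [SuppInf1] at h3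
      exact h3 D subset_rfl M (Supp.mono hCD hM)
  | tens ψ1 ψ2 _ _ =>
    intro B L K h1 h2
    simp only [Supp] at h1 ⊢
    intro C hBC M p hM
    rw [add_assoc]
    refine h1 C hBC (K + M) p (fun D hCD hφ => ?_)
    have h3 := h2 D (hBC.trans hCD) hφ
    simp only [Supp] at h3
    exact h3 D subset_rfl M p (SuppInf2.mono hCD hM)
  | wth ψ1 ψ2 ih1 ih2 =>
    intro B L K h1 h2
    simp only [Supp]
    constructor
    · refine ih1 B L K h1 (fun C hC hφ => ?_)
      have h3 := h2 C hC hφ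
      simp only [Supp] at h3
      exact h3.1
    · refine ih2 B L K h1 (fun C hC hφ => ?_)
      have h3 := h2 C hC hφ
      simp only [Supp] at h3
      exact h3.2
  | plus ψ1 ψ2 _ _ =>
    intro B L K h1 h2
    simp only [Supp] at h1 ⊢
    intro C hBC M p hM1 hM2
    rw [add_assoc]
    refine h1 C hBC (K + M) p (fun D hCD hφ => ?_)
    have h3 := h2 D (hBC.trans hCD) hφ
    simp only [Supp] at h3
    exact h3 D subset_rfl M p (SuppInf1.mono hCD hM1) (SuppInf1.mono hCD hM2)
  | bang ψ1 _ =>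
    intro B L K h1 h2
    simp only [Supp] at h1 ⊢
    intro C hBC M p hM
    rw [add_assoc]
    refine h1 C hBC (K + M) p (fun D hCD hφ => ?_)
    have h3 := h2 D (hBC.trans hCD) hφ
    simp only [Supp] at h3
    exact h3 D subset_rfl M p (fun E hDE hψ => hM E (hCD.trans hDE) hψ)

theorem bang_cut (B : Base) (L K : Multiset Atom) (φ ψ : Fml)
    (h1 : Supp B L (.bang φ)) (h2 : SuppSeq B K {.bang φ} ψ) :
    Supp B (L + K) ψ := by
  refine bang_cut_aux φ ψ B L K h1 (fun C hBC hφ => ?_)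
  have h3 := h2 C hBC 0 ?_ ?_
  · simpa using h3
  · refine ⟨[(φ, 0)], ?_, by simp, ?_⟩
    · rw [show Multiset.filter (fun ψ => isBang ψ = true) ({Fml.bang φ} : Multiset Fml)
          = {Fml.bang φ} by rw [Multiset.filter_singleton]; simp [isBang]]
      simp [unbang]
    · intro x hx
      simp only [List.mem_singleton] at hx
      subst hx
      exact hφ
  · refine ⟨[], ?_, by simp, by simp⟩
    rw [show Multiset.filter (fun ψ => isBang ψ = false) ({Fml.bang φ} : Multiset Fml)
        = 0 by rw [Multiset.filter_singleton]; simp [isBang]]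
    simp
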